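/- arXiv:2512.21656 — 2 statements merged into one kernel-verified Lean document; each statement's English description precedes it below -/
import Mathlib

section
/- (Theorem 1) Let T : [0,1]³ → ℝ³ be a differentiable map, and suppose there exist functions a₁, a₂, a₃, φ₁, φ₂, φ₃ : [0,1]³ → ℝ³ and constants F, M ≥ 0 and τ > 0 such that at every point p = (u,v,w) ∈ [0,1]³: ∂T/∂u (p) = a₁(p) + φ₁(p), ∂T/∂v (p) = a₂(p) + φ₂(p), ∂T/∂w (p) = a₃(p) + φ₃(p); ‖aᵢ(p)‖ ≤ F and ‖φᵢ(p)‖ ≤ M for i = 1, 2, 3; det[φ₁(p), φ₂(p), φ₃(p)] ≥ τ; and F³ + 3MF² + 3FM² < τ. Then the Jacobian determinant det[∂T/∂u (p), ∂T/∂v (p), ∂T/∂w (p)] > 0 for every p ∈ [0,1]³, i.e., the mapping T is regular. -/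
/-- Determinant of the 3×3 real matrix whose columns are `a`, `b`, `c`. -/
noncomputable def det3 (a b c : EuclideanSpace ℝ (Fin 3)) : ℝ :=
  Matrix.det (Matrix.of ![![a 0, b 0, c 0], ![a 1, b 1, c 1], ![a 2, b 2, c 2]])

/-!
`det3` is trilinear, so exchanging the columns `φᵢ` for `aᵢ + φᵢ` one at a time changes it by
`det3 a₁ (a₂+φ₂) (a₃+φ₃) + det3 φ₁ a₂ (a₃+φ₃) + det3 φ₁ φ₂ a₃`. By Hadamard's inequality
(Cauchy–Schwarz on the triple product, with Lagrange's identity for the cross product) these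
terms are at most `F(F+M)²`, `MF(F+M)` and `M²F`, which add up to
`(F+M)³ - M³ = F³ + 3MF² + 3FM² < τ ≤ det3 φ₁ φ₂ φ₃`.
-/

open Matrix

lemma det3_eq_dotProduct_cross (a b c : EuclideanSpace ℝ (Fin 3)) :
    det3 a b c = a.ofLp ⬝ᵥ (b.ofLp ⨯₃ c.ofLp) := by
  simp only [det3, det_fin_three, cross_apply, dotProduct, Fin.sum_univ_three, of_apply,
    cons_val_zero, cons_val_one, cons_val_two, head_cons, tail_cons]
  ring

lemma det3_add_left (a p b c : EuclideanSpace ℝ (Fin 3)) :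
    det3 (a + p) b c = det3 a b c + det3 p b c := by
  simp only [det3_eq_dotProduct_cross, WithLp.ofLp_add, add_dotProduct]

lemma det3_add_middle (a b q c : EuclideanSpace ℝ (Fin 3)) :
    det3 a (b + q) c = det3 a b c + det3 a q c := by
  simp only [det3_eq_dotProduct_cross, WithLp.ofLp_add, map_add, LinearMap.add_apply,
    dotProduct_add]

lemma det3_add_right (a b c r : EuclideanSpace ℝ (Fin 3)) :
    det3 a b (c + r) = det3 a b c + det3 a b r := by
  simp only [det3_eq_dotProduct_cross, WithLp.ofLp_add, map_add, dotProduct_add]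

lemma EuclideanSpace.norm_toLp_cross_le (b c : EuclideanSpace ℝ (Fin 3)) :
    ‖WithLp.toLp 2 (b.ofLp ⨯₃ c.ofLp)‖ ≤ ‖b‖ * ‖c‖ := by
  have dot_eq_inner (x y : EuclideanSpace ℝ (Fin 3)) : x.ofLp ⬝ᵥ y.ofLp = inner ℝ x y := by
    simp [EuclideanSpace.inner_eq_star_dotProduct, dotProduct_comm]
  -- Lagrange's identity
  have lagrange := cross_dot_cross b.ofLp c.ofLp b.ofLp c.ofLp
  rw [← WithLp.ofLp_toLp 2 (b.ofLp ⨯₃ c.ofLp)] at lagrange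
  simp only [dot_eq_inner, real_inner_self_eq_norm_sq, real_inner_comm c b] at lagrange
  refine (pow_le_pow_iff_left₀ (norm_nonneg _) (by positivity) two_ne_zero).mp ?_
  rw [lagrange, mul_pow]
  linarith [mul_self_nonneg (inner ℝ c b)]

lemma abs_det3_le (a b c : EuclideanSpace ℝ (Fin 3)) :
    |det3 a b c| ≤ ‖a‖ * ‖b‖ * ‖c‖ :=
  calc |det3 a b c| = |inner ℝ a (WithLp.toLp 2 (b.ofLp ⨯₃ c.ofLp))| := by
        simp [det3_eq_dotProduct_cross, EuclideanSpace.inner_eq_star_dotProduct, dotProduct_comm]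
    _ ≤ ‖a‖ * ‖WithLp.toLp 2 (b.ofLp ⨯₃ c.ofLp)‖ := abs_real_inner_le_norm _ _
    _ ≤ ‖a‖ * ‖b‖ * ‖c‖ := by
        rw [mul_assoc]; gcongr; exact EuclideanSpace.norm_toLp_cross_le b c

lemma abs_det3_le_of_norm_le {a b c : EuclideanSpace ℝ (Fin 3)} {x y z : ℝ}
    (ha : ‖a‖ ≤ x) (hb : ‖b‖ ≤ y) (hc : ‖c‖ ≤ z) :
    |det3 a b c| ≤ x * y * z := by
  have hx : 0 ≤ x := (norm_nonneg a).trans ha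
  have hy : 0 ≤ y := (norm_nonneg b).trans hb
  exact (abs_det3_le a b c).trans (by gcongr)

lemma abs_det3_add_sub_le {a b c p q r : EuclideanSpace ℝ (Fin 3)} {F M : ℝ}
    (ha : ‖a‖ ≤ F) (hb : ‖b‖ ≤ F) (hc : ‖c‖ ≤ F)
    (hp : ‖p‖ ≤ M) (hq : ‖q‖ ≤ M) (hr : ‖r‖ ≤ M) :
    |det3 (a + p) (b + q) (c + r) - det3 p q r| ≤ F ^ 3 + 3 * M * F ^ 2 + 3 * F * M ^ 2 := by
  have telescope : det3 (a + p) (b + q) (c + r) - det3 p q r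
      = det3 a (b + q) (c + r) + det3 p b (c + r) + det3 p q c := by
    rw [det3_add_left, det3_add_middle p, det3_add_right p q]
    ring
  have hbq : ‖b + q‖ ≤ F + M := (norm_add_le b q).trans (add_le_add hb hq)
  have hcr : ‖c + r‖ ≤ F + M := (norm_add_le c r).trans (add_le_add hc hr)
  calc |det3 (a + p) (b + q) (c + r) - det3 p q r|
      ≤ |det3 a (b + q) (c + r)| + |det3 p b (c + r)| + |det3 p q c| := by
        rw [telescope]; exact abs_add_three _ _ _
    _ ≤ F * (F + M) * (F + M) + M * F * (F + M) + M * M * F := by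
        gcongr
        exacts [abs_det3_le_of_norm_le ha hbq hcr, abs_det3_le_of_norm_le hp hb hcr,
          abs_det3_le_of_norm_le hp hq hc]
    _ = F ^ 3 + 3 * M * F ^ 2 + 3 * F * M ^ 2 := by ring

theorem coons_volume_regular_of_bounds_general
    (T : ℝ → ℝ → ℝ → EuclideanSpace ℝ (Fin 3))
    (a₁ a₂ a₃ φ₁ φ₂ φ₃ : ℝ → ℝ → ℝ → EuclideanSpace ℝ (Fin 3))
    (F M τ : ℝ)
    (hdu : ∀ u ∈ Set.Icc (0:ℝ) 1, ∀ v ∈ Set.Icc (0:ℝ) 1, ∀ w ∈ Set.Icc (0:ℝ) 1,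
      HasDerivAt (fun t => T t v w) (a₁ u v w + φ₁ u v w) u)
    (hdv : ∀ u ∈ Set.Icc (0:ℝ) 1, ∀ v ∈ Set.Icc (0:ℝ) 1, ∀ w ∈ Set.Icc (0:ℝ) 1,
      HasDerivAt (fun t => T u t w) (a₂ u v w + φ₂ u v w) v)
    (hdw : ∀ u ∈ Set.Icc (0:ℝ) 1, ∀ v ∈ Set.Icc (0:ℝ) 1, ∀ w ∈ Set.Icc (0:ℝ) 1,
      HasDerivAt (fun t => T u v t) (a₃ u v w + φ₃ u v w) w)
    (ha₁ : ∀ u ∈ Set.Icc (0:ℝ) 1, ∀ v ∈ Set.Icc (0:ℝ) 1, ∀ w ∈ Set.Icc (0:ℝ) 1,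
      ‖a₁ u v w‖ ≤ F)
    (ha₂ : ∀ u ∈ Set.Icc (0:ℝ) 1, ∀ v ∈ Set.Icc (0:ℝ) 1, ∀ w ∈ Set.Icc (0:ℝ) 1,
      ‖a₂ u v w‖ ≤ F)
    (ha₃ : ∀ u ∈ Set.Icc (0:ℝ) 1, ∀ v ∈ Set.Icc (0:ℝ) 1, ∀ w ∈ Set.Icc (0:ℝ) 1,
      ‖a₃ u v w‖ ≤ F)
    (hφ₁ : ∀ u ∈ Set.Icc (0:ℝ) 1, ∀ v ∈ Set.Icc (0:ℝ) 1, ∀ w ∈ Set.Icc (0:ℝ) 1,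
      ‖φ₁ u v w‖ ≤ M)
    (hφ₂ : ∀ u ∈ Set.Icc (0:ℝ) 1, ∀ v ∈ Set.Icc (0:ℝ) 1, ∀ w ∈ Set.Icc (0:ℝ) 1,
      ‖φ₂ u v w‖ ≤ M)
    (hφ₃ : ∀ u ∈ Set.Icc (0:ℝ) 1, ∀ v ∈ Set.Icc (0:ℝ) 1, ∀ w ∈ Set.Icc (0:ℝ) 1,
      ‖φ₃ u v w‖ ≤ M)
    (hdet : ∀ u ∈ Set.Icc (0:ℝ) 1, ∀ v ∈ Set.Icc (0:ℝ) 1, ∀ w ∈ Set.Icc (0:ℝ) 1,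
      τ ≤ det3 (φ₁ u v w) (φ₂ u v w) (φ₃ u v w))
    (hlt : F ^ 3 + 3 * M * F ^ 2 + 3 * F * M ^ 2 < τ) :
    ∀ u ∈ Set.Icc (0:ℝ) 1, ∀ v ∈ Set.Icc (0:ℝ) 1, ∀ w ∈ Set.Icc (0:ℝ) 1,
      0 < det3 (deriv (fun t => T t v w) u) (deriv (fun t => T u t w) v)
          (deriv (fun t => T u v t) w) := by
  intro u hu v hv w hw
  rw [(hdu u hu v hv w hw).deriv, (hdv u hu v hv w hw).deriv, (hdw u hu v hv w hw).deriv]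
  have perturbation := abs_det3_add_sub_le (ha₁ u hu v hv w hw) (ha₂ u hu v hv w hw)
    (ha₃ u hu v hv w hw) (hφ₁ u hu v hv w hw) (hφ₂ u hu v hv w hw) (hφ₃ u hu v hv w hw)
  linarith [(abs_le.mp perturbation).1, hdet u hu v hv w hw]

/-- Theorem 1: general sufficient condition for the regularity of a
Coons volume mapping `T : [0,1]³ → ℝ³` whose partial derivatives decompose as
`∂T/∂u = a₁ + φ₁`, `∂T/∂v = a₂ + φ₂`, `∂T/∂w = a₃ + φ₃`. -/
theorem coons_volume_regular_of_bounds
    (T : ℝ → ℝ → ℝ → EuclideanSpace ℝ (Fin 3))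
    (a₁ a₂ a₃ φ₁ φ₂ φ₃ : ℝ → ℝ → ℝ → EuclideanSpace ℝ (Fin 3))
    (F M τ : ℝ) (hF : 0 ≤ F) (hM : 0 ≤ M) (hτ : 0 < τ)
    (hdu : ∀ u ∈ Set.Icc (0:ℝ) 1, ∀ v ∈ Set.Icc (0:ℝ) 1, ∀ w ∈ Set.Icc (0:ℝ) 1,
      HasDerivAt (fun t => T t v w) (a₁ u v w + φ₁ u v w) u)
    (hdv : ∀ u ∈ Set.Icc (0:ℝ) 1, ∀ v ∈ Set.Icc (0:ℝ) 1, ∀ w ∈ Set.Icc (0:ℝ) 1,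
      HasDerivAt (fun t => T u t w) (a₂ u v w + φ₂ u v w) v)
    (hdw : ∀ u ∈ Set.Icc (0:ℝ) 1, ∀ v ∈ Set.Icc (0:ℝ) 1, ∀ w ∈ Set.Icc (0:ℝ) 1,
      HasDerivAt (fun t => T u v t) (a₃ u v w + φ₃ u v w) w)
    (ha₁ : ∀ u ∈ Set.Icc (0:ℝ) 1, ∀ v ∈ Set.Icc (0:ℝ) 1, ∀ w ∈ Set.Icc (0:ℝ) 1,
      ‖a₁ u v w‖ ≤ F)
    (ha₂ : ∀ u ∈ Set.Icc (0:ℝ) 1, ∀ v ∈ Set.Icc (0:ℝ) 1, ∀ w ∈ Set.Icc (0:ℝ) 1,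
      ‖a₂ u v w‖ ≤ F)
    (ha₃ : ∀ u ∈ Set.Icc (0:ℝ) 1, ∀ v ∈ Set.Icc (0:ℝ) 1, ∀ w ∈ Set.Icc (0:ℝ) 1,
      ‖a₃ u v w‖ ≤ F)
    (hφ₁ : ∀ u ∈ Set.Icc (0:ℝ) 1, ∀ v ∈ Set.Icc (0:ℝ) 1, ∀ w ∈ Set.Icc (0:ℝ) 1,
      ‖φ₁ u v w‖ ≤ M)
    (hφ₂ : ∀ u ∈ Set.Icc (0:ℝ) 1, ∀ v ∈ Set.Icc (0:ℝ) 1, ∀ w ∈ Set.Icc (0:ℝ) 1,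
      ‖φ₂ u v w‖ ≤ M)
    (hφ₃ : ∀ u ∈ Set.Icc (0:ℝ) 1, ∀ v ∈ Set.Icc (0:ℝ) 1, ∀ w ∈ Set.Icc (0:ℝ) 1,
      ‖φ₃ u v w‖ ≤ M)
    (hdet : ∀ u ∈ Set.Icc (0:ℝ) 1, ∀ v ∈ Set.Icc (0:ℝ) 1, ∀ w ∈ Set.Icc (0:ℝ) 1,
      τ ≤ det3 (φ₁ u v w) (φ₂ u v w) (φ₃ u v w))
    (hlt : F ^ 3 + 3 * M * F ^ 2 + 3 * F * M ^ 2 < τ) :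
    ∀ u ∈ Set.Icc (0:ℝ) 1, ∀ v ∈ Set.Icc (0:ℝ) 1, ∀ w ∈ Set.Icc (0:ℝ) 1,
      0 < det3 (deriv (fun t => T t v w) u) (deriv (fun t => T u t w) v)
          (deriv (fun t => T u v t) w) :=
  coons_volume_regular_of_bounds_general T a₁ a₂ a₃ φ₁ φ₂ φ₃ F M τ hdu hdv hdw ha₁ ha₂ ha₃ hφ₁ hφ₂
    hφ₃ hdet hlt
end

section
/- (Theorem 2) Let n ≥ 1 and let P : {0,…,n}³ → ℝ³ be control points defining the trivariate Bézier map T(u,v,w) = Σ_{i=0}^{n} Σ_{j=0}^{n} Σ_{k=0}^{n} P_{ijk} B_i^n(u) B_j^n(v) B_k^n(w). If J_{pqr} > 0 for all p, q, r ∈ {0,…,3n−1}, then the Jacobian determinant det[∂T/∂u, ∂T/∂v, ∂T/∂w](u,v,w) > 0 for all (u,v,w) ∈ [0,1]³; that is, the mapping T is regular on [0,1]³. -/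
/-- The Bernstein basis polynomial `B_i^n(t) = C(n,i) tⁱ (1−t)^{n−i}` as a real
function. -/
noncomputable def bern (n i : ℕ) (t : ℝ) : ℝ :=
  (n.choose i : ℝ) * t ^ i * (1 - t) ^ (n - i)

/-- The trivariate Bézier volume of degree `(n,n,n)` with control points `P`. -/
noncomputable def bezierVolume (n : ℕ) (P : ℕ → ℕ → ℕ → EuclideanSpace ℝ (Fin 3))
    (u v w : ℝ) : EuclideanSpace ℝ (Fin 3) :=
  ∑ i ∈ Finset.range (n + 1), ∑ j ∈ Finset.range (n + 1), ∑ k ∈ Finset.range (n + 1),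
    (bern n i u * bern n j v * bern n k w) • P i j k

/-- `D(i₁,j₁,k₁,i₂,j₂,k₂,i₃,j₃,k₃) = n³ det[ΔᵘP, ΔᵛP, ΔʷP]`. -/
noncomputable def Dcoef (n : ℕ) (P : ℕ → ℕ → ℕ → EuclideanSpace ℝ (Fin 3))
    (i₁ j₁ k₁ i₂ j₂ k₂ i₃ j₃ k₃ : ℕ) : ℝ :=
  (n : ℝ) ^ 3 *
    det3 (P (i₁ + 1) j₁ k₁ - P i₁ j₁ k₁) (P i₂ (j₂ + 1) k₂ - P i₂ j₂ k₂)
      (P i₃ j₃ (k₃ + 1) - P i₃ j₃ k₃)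

/-- The Bézier coefficients `J_{pqr}` of the Jacobian determinant of the trivariate
Bézier volume of degree `n` with control points `P`. -/
noncomputable def Jcoef (n : ℕ) (P : ℕ → ℕ → ℕ → EuclideanSpace ℝ (Fin 3))
    (p q r : ℕ) : ℝ :=
  ∑ i₁ ∈ Finset.range n, ∑ i₂ ∈ Finset.range (n + 1), ∑ i₃ ∈ Finset.range (n + 1),
  ∑ j₁ ∈ Finset.range (n + 1), ∑ j₂ ∈ Finset.range n, ∑ j₃ ∈ Finset.range (n + 1),
  ∑ k₁ ∈ Finset.range (n + 1), ∑ k₂ ∈ Finset.range (n + 1), ∑ k₃ ∈ Finset.range n,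
    if i₁ + i₂ + i₃ = p ∧ j₁ + j₂ + j₃ = q ∧ k₁ + k₂ + k₃ = r then
      Dcoef n P i₁ j₁ k₁ i₂ j₂ k₂ i₃ j₃ k₃ *
        (((n - 1).choose i₁ * n.choose i₂ * n.choose i₃ * n.choose j₁ *
            (n - 1).choose j₂ * n.choose j₃ * n.choose k₁ * n.choose k₂ *
            (n - 1).choose k₃ : ℕ) : ℝ) /
        (((3 * n - 1).choose p * (3 * n - 1).choose q * (3 * n - 1).choose r : ℕ) : ℝ)
    else 0

/-!
Each partial derivative of the Bernstein form of `T` is again a Bernstein sum, of degree `n - 1`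
in the differentiated variable, with the forward differences of the control points as
coefficients. Trilinearity of the determinant expands `det[∂T/∂u, ∂T/∂v, ∂T/∂w]` into a
ninefold sum, and the product rule `Bᵢᵃ Bⱼᵇ = C(a,i) C(b,j) / C(a+b,i+j) · Bᵢ₊ⱼᵃ⁺ᵇ` collects it
into the Bernstein form `∑ J_{pqr} B_p^{3n-1}(u) B_q^{3n-1}(v) B_r^{3n-1}(w)`. On `[0,1]` the
Bernstein polynomials are nonnegative and at least one of them is positive, so positive
coefficients give a positive Jacobian.
-/

open Finset

local notation "ℝ³" => EuclideanSpace ℝ (Fin 3)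

section Det3

lemma det3_eq (a b c : ℝ³) :
    det3 a b c = a 0 * (b 1 * c 2 - b 2 * c 1) - b 0 * (a 1 * c 2 - a 2 * c 1)
      + c 0 * (a 1 * b 2 - a 2 * b 1) := by
  simp only [det3, Matrix.det_fin_three, Matrix.of_apply, Matrix.cons_val', Matrix.cons_val_zero,
    Matrix.cons_val_one, Matrix.cons_val, Matrix.cons_val_fin_one]
  ring

lemma det3_add_left_s11 (x y b c : ℝ³) : det3 (x + y) b c = det3 x b c + det3 y b c := by
  simp only [det3_eq, PiLp.add_apply]; ring

lemma det3_add_mid (a x y c : ℝ³) : det3 a (x + y) c = det3 a x c + det3 a y c := by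
  simp only [det3_eq, PiLp.add_apply]; ring

lemma det3_add_right_s11 (a b x y : ℝ³) : det3 a b (x + y) = det3 a b x + det3 a b y := by
  simp only [det3_eq, PiLp.add_apply]; ring

lemma det3_smul_left (r : ℝ) (a b c : ℝ³) : det3 (r • a) b c = r * det3 a b c := by
  simp only [det3_eq, PiLp.smul_apply, smul_eq_mul]; ring

lemma det3_smul_mid (r : ℝ) (a b c : ℝ³) : det3 a (r • b) c = r * det3 a b c := by
  simp only [det3_eq, PiLp.smul_apply, smul_eq_mul]; ring

lemma det3_smul_right (r : ℝ) (a b c : ℝ³) : det3 a b (r • c) = r * det3 a b c := by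
  simp only [det3_eq, PiLp.smul_apply, smul_eq_mul]; ring

variable {ι : Type*} (s : Finset ι) (f : ι → ℝ³) (a b c : ℝ³)

lemma det3_sum_left : det3 (∑ x ∈ s, f x) b c = ∑ x ∈ s, det3 (f x) b c :=
  map_sum (AddMonoidHom.mk' (det3 · b c) fun x y => det3_add_left_s11 x y b c) f s

lemma det3_sum_mid : det3 a (∑ x ∈ s, f x) c = ∑ x ∈ s, det3 a (f x) c :=
  map_sum (AddMonoidHom.mk' (det3 a · c) fun x y => det3_add_mid a x y c) f s

lemma det3_sum_right : det3 a b (∑ x ∈ s, f x) = ∑ x ∈ s, det3 a b (f x) :=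
  map_sum (AddMonoidHom.mk' (det3 a b ·) fun x y => det3_add_right_s11 a b x y) f s

end Det3

section SumManipulation

variable {ι M : Type*} [AddCommMonoid M]

lemma sum_sum_sum_sum_comm (s t u : Finset ι) (a : Finset ι) (f : ι → ι → ι → ι → M) :
    ∑ p ∈ s, ∑ q ∈ t, ∑ r ∈ u, ∑ x ∈ a, f p q r x
      = ∑ x ∈ a, ∑ p ∈ s, ∑ q ∈ t, ∑ r ∈ u, f p q r x :=
  (sum_congr rfl fun _ _ => (sum_congr rfl fun _ _ => sum_comm).trans sum_comm).trans sum_comm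

lemma sum_sum_sum_comm_nine (S T U A₁ A₂ A₃ B₁ B₂ B₃ C₁ C₂ C₃ : Finset ι)
    (f : ι → ι → ι → ι → ι → ι → ι → ι → ι → ι → ι → ι → M) :
    ∑ p ∈ S, ∑ q ∈ T, ∑ r ∈ U, ∑ a₁ ∈ A₁, ∑ a₂ ∈ A₂, ∑ a₃ ∈ A₃, ∑ b₁ ∈ B₁, ∑ b₂ ∈ B₂,
      ∑ b₃ ∈ B₃, ∑ c₁ ∈ C₁, ∑ c₂ ∈ C₂, ∑ c₃ ∈ C₃, f p q r a₁ a₂ a₃ b₁ b₂ b₃ c₁ c₂ c₃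
    = ∑ a₁ ∈ A₁, ∑ a₂ ∈ A₂, ∑ a₃ ∈ A₃, ∑ b₁ ∈ B₁, ∑ b₂ ∈ B₂, ∑ b₃ ∈ B₃, ∑ c₁ ∈ C₁,
      ∑ c₂ ∈ C₂, ∑ c₃ ∈ C₃, ∑ p ∈ S, ∑ q ∈ T, ∑ r ∈ U, f p q r a₁ a₂ a₃ b₁ b₂ b₃ c₁ c₂ c₃ := by
  simp only [sum_sum_sum_sum_comm S T U]

lemma sum_sum_sum_ite_eq [DecidableEq ι] {s t u : Finset ι} {a b c : ι} (ha : a ∈ s) (hb : b ∈ t)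
    (hc : c ∈ u) (f : ι → ι → ι → M) :
    ∑ p ∈ s, ∑ q ∈ t, ∑ r ∈ u, (if a = p ∧ b = q ∧ c = r then f p q r else 0) = f a b c := by
  simp only [ite_and, sum_ite_irrel, sum_ite_eq, ha, hb, hc, if_true, sum_const_zero]

lemma sum_nine_transpose (A₁ B₁ C₁ A₂ B₂ C₂ A₃ B₃ C₃ : Finset ι)
    (f : ι → ι → ι → ι → ι → ι → ι → ι → ι → M) :
    ∑ a₁ ∈ A₁, ∑ b₁ ∈ B₁, ∑ c₁ ∈ C₁, ∑ a₂ ∈ A₂, ∑ b₂ ∈ B₂, ∑ c₂ ∈ C₂,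
      ∑ a₃ ∈ A₃, ∑ b₃ ∈ B₃, ∑ c₃ ∈ C₃, f a₁ a₂ a₃ b₁ b₂ b₃ c₁ c₂ c₃
    = ∑ a₁ ∈ A₁, ∑ a₂ ∈ A₂, ∑ a₃ ∈ A₃, ∑ b₁ ∈ B₁, ∑ b₂ ∈ B₂, ∑ b₃ ∈ B₃,
      ∑ c₁ ∈ C₁, ∑ c₂ ∈ C₂, ∑ c₃ ∈ C₃, f a₁ a₂ a₃ b₁ b₂ b₃ c₁ c₂ c₃ := by
  -- each instance swaps two indices that the right-hand side orders the other way round,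
  -- so the rewriting terminates
  simp only [sum_comm (s := B₁) (t := A₂), sum_comm (s := B₁) (t := A₃),
    sum_comm (s := C₁) (t := A₂), sum_comm (s := C₁) (t := B₂), sum_comm (s := C₁) (t := A₃),
    sum_comm (s := C₁) (t := B₃), sum_comm (s := B₂) (t := A₃), sum_comm (s := C₂) (t := A₃),
    sum_comm (s := C₂) (t := B₃)]

end SumManipulation

section Bernstein

lemma bern_eq_eval (n i : ℕ) (t : ℝ) : bern n i t = (bernsteinPolynomial ℝ n i).eval t := by
  simp [bern, bernsteinPolynomial]

lemma bern_nonneg (n i : ℕ) {t : ℝ} (ht : t ∈ Set.Icc (0 : ℝ) 1) : 0 ≤ bern n i t := by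
  have h₀ : 0 ≤ t := ht.1
  have h₁ : 0 ≤ 1 - t := sub_nonneg.2 ht.2
  unfold bern
  positivity

lemma exists_bern_pos (n : ℕ) {t : ℝ} (ht : t ∈ Set.Icc (0 : ℝ) 1) :
    ∃ i ≤ n, 0 < bern n i t := by
  rcases ht.2.lt_or_eq with h | rfl
  · exact ⟨0, n.zero_le, by simpa [bern] using pow_pos (sub_pos.2 h) n⟩
  · exact ⟨n, le_rfl, by simp [bern]⟩

lemma hasDerivAt_sum_bern_smul {E : Type*} [NormedAddCommGroup E] [NormedSpace ℝ E]
    (n : ℕ) (R : ℕ → E) (t : ℝ) :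
    HasDerivAt (fun s => ∑ i ∈ range (n + 1), bern n i s • R i)
      (∑ i ∈ range n, (n * bern (n - 1) i t) • (R (i + 1) - R i)) t := by
  have hB : ∀ i, HasDerivAt (bern n i)
      ((Polynomial.derivative (bernsteinPolynomial ℝ n i)).eval t) t := fun i => by
    simpa only [funext (bern_eq_eval n i)] using (bernsteinPolynomial ℝ n i).hasDerivAt t
  convert HasDerivAt.fun_sum fun i _ => (hB i).smul_const (R i) using 1
  set g : ℕ → E := fun i => (n * bern (n - 1) i t) • R i
  have hg : g n = 0 := by
    rcases n with _ | m
    · simp [g]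
    · simp [g, bern]
  have telescope : ∑ i ∈ range n, g (i + 1) + g 0 = ∑ i ∈ range n, g i := by
    rw [← sum_range_succ', sum_range_succ, hg, add_zero]
  simp only [smul_sub, sum_sub_distrib]
  rw [← telescope, sum_range_succ']
  simp only [bernsteinPolynomial.derivative_succ, bernsteinPolynomial.derivative_zero,
    Polynomial.eval_mul, Polynomial.eval_sub, Polynomial.eval_neg, Polynomial.eval_natCast,
    ← bern_eq_eval, g, mul_sub, sub_smul, sum_sub_distrib, neg_mul, neg_smul]
  abel

lemma sum_mul_bern_pos {m : ℕ} {c : ℕ → ℝ} (hc : ∀ p < m + 1, 0 < c p) {t : ℝ}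
    (ht : t ∈ Set.Icc (0 : ℝ) 1) : 0 < ∑ p ∈ range (m + 1), c p * bern m p t := by
  obtain ⟨p, hp, hpos⟩ := exists_bern_pos m ht
  exact sum_pos' (fun i hi => mul_nonneg (hc i (mem_range.1 hi)).le (bern_nonneg m i ht))
    ⟨p, mem_range.2 (Nat.lt_succ_of_le hp), mul_pos (hc p (Nat.lt_succ_of_le hp)) hpos⟩

lemma sum_sum_sum_mul_bern_pos {m : ℕ} {c : ℕ → ℕ → ℕ → ℝ}
    (hc : ∀ p q r, p < m + 1 → q < m + 1 → r < m + 1 → 0 < c p q r) {u v w : ℝ}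
    (hu : u ∈ Set.Icc (0 : ℝ) 1) (hv : v ∈ Set.Icc (0 : ℝ) 1) (hw : w ∈ Set.Icc (0 : ℝ) 1) :
    0 < ∑ p ∈ range (m + 1), ∑ q ∈ range (m + 1), ∑ r ∈ range (m + 1),
      c p q r * bern m p u * bern m q v * bern m r w := by
  have nested : ∑ p ∈ range (m + 1), ∑ q ∈ range (m + 1), ∑ r ∈ range (m + 1),
      c p q r * bern m p u * bern m q v * bern m r w
      = ∑ p ∈ range (m + 1), (∑ q ∈ range (m + 1),
          (∑ r ∈ range (m + 1), c p q r * bern m r w) * bern m q v) * bern m p u := by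
    simp only [sum_mul]
    exact sum_congr rfl fun _ _ => sum_congr rfl fun _ _ => sum_congr rfl fun _ _ => by ring
  rw [nested]
  exact sum_mul_bern_pos (fun p hp => sum_mul_bern_pos (fun q hq =>
    sum_mul_bern_pos (fun r hr => hc p q r hp hq hr) hw) hv) hu

lemma bern_mul_bern {a b i j : ℕ} (hi : i ≤ a) (hj : j ≤ b) (t : ℝ) :
    bern a i t * bern b j t
      = (a.choose i * b.choose j : ℝ) / (a + b).choose (i + j) * bern (a + b) (i + j) t := by
  have : ((a + b).choose (i + j) : ℝ) ≠ 0 := by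
    exact_mod_cast (Nat.choose_pos (Nat.add_le_add hi hj)).ne'
  unfold bern
  rw [show a + b - (i + j) = (a - i) + (b - j) by omega]
  field_simp
  ring

lemma bern_mul_bern_mul_bern {a b c i j k : ℕ} (hi : i ≤ a) (hj : j ≤ b) (hk : k ≤ c) (t : ℝ) :
    bern a i t * bern b j t * bern c k t
      = (a.choose i * b.choose j * c.choose k : ℝ) / (a + b + c).choose (i + j + k)
        * bern (a + b + c) (i + j + k) t := by
  have : ((a + b).choose (i + j) : ℝ) ≠ 0 := by
    exact_mod_cast (Nat.choose_pos (Nat.add_le_add hi hj)).ne'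
  rw [bern_mul_bern hi hj, mul_assoc, bern_mul_bern (Nat.add_le_add hi hj) hk]
  field_simp

end Bernstein

section BezierVolume

variable (n : ℕ) (P : ℕ → ℕ → ℕ → ℝ³) (u v w : ℝ)

lemma deriv_bezierVolume_fst :
    deriv (fun t => bezierVolume n P t v w) u
      = ∑ i ∈ range n, ∑ j ∈ range (n + 1), ∑ k ∈ range (n + 1),
          (n * bern (n - 1) i u * bern n j v * bern n k w) • (P (i + 1) j k - P i j k) := by
  have hT : (fun t => bezierVolume n P t v w) = fun t => ∑ i ∈ range (n + 1),
      bern n i t • ∑ j ∈ range (n + 1), ∑ k ∈ range (n + 1),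
        (bern n j v * bern n k w) • P i j k := by
    funext t
    simp only [bezierVolume, smul_sum, smul_smul, mul_assoc]
  rw [hT, (hasDerivAt_sum_bern_smul n _ u).deriv]
  simp only [← sum_sub_distrib, ← smul_sub, smul_sum, smul_smul, mul_assoc]

lemma deriv_bezierVolume_snd :
    deriv (fun t => bezierVolume n P u t w) v
      = ∑ i ∈ range (n + 1), ∑ j ∈ range n, ∑ k ∈ range (n + 1),
          (n * bern n i u * bern (n - 1) j v * bern n k w) • (P i (j + 1) k - P i j k) := by
  have hT : (fun t => bezierVolume n P u t w) = fun t => ∑ j ∈ range (n + 1),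
      bern n j t • ∑ i ∈ range (n + 1), ∑ k ∈ range (n + 1),
        (bern n i u * bern n k w) • P i j k := by
    funext t
    rw [bezierVolume, sum_comm]
    simp only [smul_sum, smul_smul, mul_left_comm, mul_assoc]
  rw [hT, (hasDerivAt_sum_bern_smul n _ v).deriv, sum_comm]
  simp only [← sum_sub_distrib, ← smul_sub, smul_sum, smul_smul, mul_left_comm, mul_assoc]

lemma deriv_bezierVolume_thd :
    deriv (fun t => bezierVolume n P u v t) w
      = ∑ i ∈ range (n + 1), ∑ j ∈ range (n + 1), ∑ k ∈ range n,
          (n * bern n i u * bern n j v * bern (n - 1) k w) • (P i j (k + 1) - P i j k) := by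
  have hT : (fun t => bezierVolume n P u v t) = fun t => ∑ k ∈ range (n + 1),
      bern n k t • ∑ i ∈ range (n + 1), ∑ j ∈ range (n + 1),
        (bern n i u * bern n j v) • P i j k := by
    funext t
    simp only [bezierVolume, smul_sum, smul_smul]
    refine (sum_congr rfl fun i _ => sum_comm).trans <| sum_comm.trans <|
      sum_congr rfl fun k _ => sum_congr rfl fun i _ => sum_congr rfl fun j _ => by ring_nf
  rw [hT, (hasDerivAt_sum_bern_smul n _ w).deriv]
  simp only [← sum_sub_distrib, ← smul_sub, smul_sum, smul_smul]
  refine sum_comm.trans <| sum_congr rfl fun i _ => sum_comm.trans <|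
    sum_congr rfl fun j _ => sum_congr rfl fun k _ => by ring_nf

lemma Jcoef_mul (p q r : ℕ) (x : ℝ) :
    Jcoef n P p q r * x =
      ∑ i₁ ∈ range n, ∑ i₂ ∈ range (n + 1), ∑ i₃ ∈ range (n + 1),
      ∑ j₁ ∈ range (n + 1), ∑ j₂ ∈ range n, ∑ j₃ ∈ range (n + 1),
      ∑ k₁ ∈ range (n + 1), ∑ k₂ ∈ range (n + 1), ∑ k₃ ∈ range n,
        if i₁ + i₂ + i₃ = p ∧ j₁ + j₂ + j₃ = q ∧ k₁ + k₂ + k₃ = r then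
          Dcoef n P i₁ j₁ k₁ i₂ j₂ k₂ i₃ j₃ k₃ *
            (((n - 1).choose i₁ * n.choose i₂ * n.choose i₃ * n.choose j₁ *
                (n - 1).choose j₂ * n.choose j₃ * n.choose k₁ * n.choose k₂ *
                (n - 1).choose k₃ : ℕ) : ℝ) /
            (((3 * n - 1).choose p * (3 * n - 1).choose q * (3 * n - 1).choose r : ℕ) : ℝ) * x
        else 0 := by
  simp only [Jcoef, sum_mul, ite_mul, zero_mul]

lemma det3_deriv_bezierVolume_eq_sum_Jcoef (hn : 1 ≤ n) :
    det3 (deriv (fun t => bezierVolume n P t v w) u) (deriv (fun t => bezierVolume n P u t w) v)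
        (deriv (fun t => bezierVolume n P u v t) w)
      = ∑ p ∈ range (3 * n), ∑ q ∈ range (3 * n), ∑ r ∈ range (3 * n),
          Jcoef n P p q r * bern (3 * n - 1) p u * bern (3 * n - 1) q v
            * bern (3 * n - 1) r w := by
  rw [deriv_bezierVolume_fst, deriv_bezierVolume_snd, deriv_bezierVolume_thd]
  simp only [det3_sum_left, det3_smul_left]
  simp only [det3_sum_mid, det3_smul_mid, mul_sum]
  simp only [det3_sum_right, det3_smul_right, mul_sum]
  rw [sum_nine_transpose]
  conv_rhs => enter [2, p, 2, q, 2, r]; rw [mul_assoc, mul_assoc, Jcoef_mul]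
  rw [sum_sum_sum_comm_nine]
  refine sum_congr rfl fun i₁ hi₁ => sum_congr rfl fun i₂ hi₂ => sum_congr rfl fun i₃ hi₃ =>
    sum_congr rfl fun j₁ hj₁ => sum_congr rfl fun j₂ hj₂ => sum_congr rfl fun j₃ hj₃ =>
    sum_congr rfl fun k₁ hk₁ => sum_congr rfl fun k₂ hk₂ => sum_congr rfl fun k₃ hk₃ => ?_
  simp only [mem_range] at hi₁ hi₂ hi₃ hj₁ hj₂ hj₃ hk₁ hk₂ hk₃
  rw [sum_sum_sum_ite_eq (mem_range.2 (by omega)) (mem_range.2 (by omega))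
    (mem_range.2 (by omega))]
  have hu := bern_mul_bern_mul_bern (Nat.le_sub_one_of_lt hi₁) (Nat.le_of_lt_succ hi₂)
    (Nat.le_of_lt_succ hi₃) u
  have hv := bern_mul_bern_mul_bern (Nat.le_of_lt_succ hj₁) (Nat.le_sub_one_of_lt hj₂)
    (Nat.le_of_lt_succ hj₃) v
  have hw := bern_mul_bern_mul_bern (Nat.le_of_lt_succ hk₁) (Nat.le_of_lt_succ hk₂)
    (Nat.le_sub_one_of_lt hk₃) w
  rw [show n - 1 + n + n = 3 * n - 1 by omega] at hu
  rw [show n + (n - 1) + n = 3 * n - 1 by omega] at hv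
  rw [show n + n + (n - 1) = 3 * n - 1 by omega] at hw
  calc _ = Dcoef n P i₁ j₁ k₁ i₂ j₂ k₂ i₃ j₃ k₃
        * (bern (n - 1) i₁ u * bern n i₂ u * bern n i₃ u)
        * (bern n j₁ v * bern (n - 1) j₂ v * bern n j₃ v)
        * (bern n k₁ w * bern n k₂ w * bern (n - 1) k₃ w) := by
        unfold Dcoef; ring
    _ = _ := by
        rw [hu, hv, hw]
        push_cast
        ring

end BezierVolume

/-- Theorem 2: if all Bézier coefficients `J_{pqr}` of the Jacobian
determinant are positive, then the trivariate Bézier volume is regular on `[0,1]³`. -/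
theorem bezier_volume_regular_of_Jcoef_pos (n : ℕ) (hn : 1 ≤ n)
    (P : ℕ → ℕ → ℕ → EuclideanSpace ℝ (Fin 3))
    (hJ : ∀ p q r : ℕ, p < 3 * n → q < 3 * n → r < 3 * n → 0 < Jcoef n P p q r) :
    ∀ u ∈ Set.Icc (0:ℝ) 1, ∀ v ∈ Set.Icc (0:ℝ) 1, ∀ w ∈ Set.Icc (0:ℝ) 1,
      0 < det3 (deriv (fun t => bezierVolume n P t v w) u)
          (deriv (fun t => bezierVolume n P u t w) v)
          (deriv (fun t => bezierVolume n P u v t) w) := by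
  intro u hu v hv w hw
  rw [det3_deriv_bezierVolume_eq_sum_Jcoef n P u v w hn]
  set m := 3 * n - 1
  have hm : 3 * n = m + 1 := by omega
  rw [hm]
  exact sum_sum_sum_mul_bern_pos (fun p q r hp hq hr => hJ p q r (hm ▸ hp) (hm ▸ hq) (hm ▸ hr))
    hu hv hw
end
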